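/- Let δ'₁ be the antiderivation of 𝔄(g) with δ'₁B = F, δ'₁β = −ψ, δ'₁(other generators) = 0. Then on the base ℬ(g), the operator δδ'₁ + δ'₁δ equals the degree operator counting total degree in (F, ψ, B, β). -/

import Mathlib

open scoped TensorProduct

noncomputable section

/-- The graded bracket on `g ⊗ Ω` induced by `[X⊗P, Y⊗Q] = ⁅X,Y⁆ ⊗ (P*Q)`. -/
def gaBracket (g : Type) [LieRing g] [LieAlgebra ℂ g] (Ω : Type) [Ring Ω] [Algebra ℂ Ω] :
    (g ⊗[ℂ] Ω) →ₗ[ℂ] (g ⊗[ℂ] Ω) →ₗ[ℂ] (g ⊗[ℂ] Ω) :=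
  TensorProduct.map₂
    (LinearMap.mk₂ ℂ (fun X Y => ⁅X, Y⁆)
      (by intros; simp [add_lie]) (by intros; simp [smul_lie])
      (by intros; simp [lie_add]) (by intros; simp [lie_smul]))
    (LinearMap.mul ℂ Ω)

/-- The submodule of `g ⊗ Ω` of `g`-valued elements with components in a submodule `S` of `Ω`. -/
def gvSub (g : Type) [LieRing g] [LieAlgebra ℂ g] {Ω : Type} [AddCommGroup Ω] [Module ℂ Ω]
    (S : Submodule ℂ Ω) : Submodule ℂ (g ⊗[ℂ] Ω) :=
  LinearMap.range (LinearMap.lTensor g S.subtype)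

/-- A bigraded-commutative algebra structure on `Ω` given by bidegree pieces `gr k l`. -/
def IsBigradedCommAlg (Ω : Type) [Ring Ω] [Algebra ℂ Ω] (gr : ℕ → ℕ → Submodule ℂ Ω) : Prop :=
  (1 : Ω) ∈ gr 0 0 ∧
  (∀ k l m n, ∀ a ∈ gr k l, ∀ b ∈ gr m n, a * b ∈ gr (k + m) (l + n)) ∧
  (∀ k l m n, ∀ a ∈ gr k l, ∀ b ∈ gr m n,
      a * b = ((-1 : ℂ)) ^ ((k + l) * (m + n)) • (b * a)) ∧
  DirectSum.IsInternal (fun p : ℕ × ℕ => gr p.1 p.2)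

/-- An antiderivation with respect to the total degree of a bigrading. -/
def IsAntideriv {Ω : Type} [Ring Ω] [Algebra ℂ Ω] (gr : ℕ → ℕ → Submodule ℂ Ω)
    (R : Ω →ₗ[ℂ] Ω) : Prop :=
  ∀ k l, ∀ a ∈ gr k l, ∀ b, R (a * b) = R a * b + ((-1 : ℂ)) ^ (k + l) • (a * R b)

/-- The bigraded Weil algebra data: a bigraded-commutative differential algebra with
differentials `d`, `δ` of bidegrees `(1,0)`, `(0,1)` and `g`-valued generators
`A, α, F, φ, ψ, ξ, B, β` satisfying the structure equations of Lemma 1.1. -/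
structure BigradedWeil (g : Type) [LieRing g] [LieAlgebra ℂ g]
    (𝔄 : Type) [Ring 𝔄] [Algebra ℂ 𝔄] where
  gr : ℕ → ℕ → Submodule ℂ 𝔄
  graded : IsBigradedCommAlg 𝔄 gr
  d : 𝔄 →ₗ[ℂ] 𝔄
  δ : 𝔄 →ₗ[ℂ] 𝔄
  d_antideriv : IsAntideriv gr d
  δ_antideriv : IsAntideriv gr δ
  d_gr : ∀ k l, ∀ x ∈ gr k l, d x ∈ gr (k + 1) l
  δ_gr : ∀ k l, ∀ x ∈ gr k l, δ x ∈ gr k (l + 1)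
  d_sq : ∀ x, d (d x) = 0
  δ_sq : ∀ x, δ (δ x) = 0
  d_δ : ∀ x, d (δ x) + δ (d x) = 0
  A : g ⊗[ℂ] 𝔄
  α : g ⊗[ℂ] 𝔄
  F : g ⊗[ℂ] 𝔄
  φ : g ⊗[ℂ] 𝔄
  ψ : g ⊗[ℂ] 𝔄
  ξ : g ⊗[ℂ] 𝔄
  B : g ⊗[ℂ] 𝔄
  β : g ⊗[ℂ] 𝔄
  A_mem : A ∈ gvSub g (gr 1 0)
  α_mem : α ∈ gvSub g (gr 0 1)
  F_mem : F ∈ gvSub g (gr 2 0)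
  φ_mem : φ ∈ gvSub g (gr 0 2)
  ψ_mem : ψ ∈ gvSub g (gr 1 1)
  ξ_mem : ξ ∈ gvSub g (gr 1 1)
  B_mem : B ∈ gvSub g (gr 2 1)
  β_mem : β ∈ gvSub g (gr 1 2)
  eqF : F = LinearMap.lTensor g d A + (2⁻¹ : ℂ) • gaBracket g 𝔄 A A
  eqφ : φ = LinearMap.lTensor g δ α + (2⁻¹ : ℂ) • gaBracket g 𝔄 α α
  eqψ : ψ = LinearMap.lTensor g δ A + LinearMap.lTensor g d α + gaBracket g 𝔄 A α
  eqξ : ξ = LinearMap.lTensor g δ A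
  eqB : B = LinearMap.lTensor g δ F + gaBracket g 𝔄 α F
  eqβ : β = LinearMap.lTensor g d φ + gaBracket g 𝔄 A φ

/-- The universal property expressing that the bigraded-commutative algebra `𝔄` is free on
the given list of `g`-valued generators with the given bidegrees. -/
def FreeOn (g : Type) [LieRing g] [LieAlgebra ℂ g] {𝔄 : Type} [Ring 𝔄] [Algebra ℂ 𝔄]
    (gr : ℕ → ℕ → Submodule ℂ 𝔄) {m : ℕ} (gens : Fin m → (ℕ × ℕ) × (g ⊗[ℂ] 𝔄)) : Prop :=
  ∀ (Ω : Type) [Ring Ω] [Algebra ℂ Ω] (grΩ : ℕ → ℕ → Submodule ℂ Ω),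
    IsBigradedCommAlg Ω grΩ →
    ∀ v : Fin m → g ⊗[ℂ] Ω,
      (∀ j, v j ∈ gvSub g (grΩ (gens j).1.1 (gens j).1.2)) →
      ∃! h : 𝔄 →ₐ[ℂ] Ω,
        (∀ k l, ∀ x ∈ gr k l, h x ∈ grΩ k l) ∧
        ∀ j, LinearMap.lTensor g h.toLinearMap (gens j).2 = v j

/-- The list of generators of the bigraded Weil algebra with their bidegrees. -/
def BigradedWeil.gens {g : Type} [LieRing g] [LieAlgebra ℂ g] {𝔄 : Type} [Ring 𝔄]
    [Algebra ℂ 𝔄] (W : BigradedWeil g 𝔄) : Fin 8 → (ℕ × ℕ) × (g ⊗[ℂ] 𝔄) :=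
  ![((1, 0), W.A), ((0, 1), W.α), ((2, 0), W.F), ((0, 2), W.φ),
    ((1, 1), W.ψ), ((1, 1), W.ξ), ((2, 1), W.B), ((1, 2), W.β)]

/-- The `i`-th component in `𝔄` of a `g`-valued element of `g ⊗ 𝔄`, w.r.t. a basis of `g`. -/
def coordEv {g : Type} [LieRing g] [LieAlgebra ℂ g] {ι : Type} (b : Module.Basis ι ℂ g)
    {𝔄 : Type} [Ring 𝔄] [Algebra ℂ 𝔄] (i : ι) : g ⊗[ℂ] 𝔄 →ₗ[ℂ] 𝔄 :=
  (TensorProduct.lid ℂ 𝔄).toLinearMap ∘ₗ LinearMap.rTensor 𝔄 (b.coord i)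

/-- Evaluation of a multilinear form `I` on `g` on `g`-valued elements `Z j ∈ g ⊗ 𝔄`,
multiplying the `𝔄`-components in order. -/
def multiEval {g : Type} [LieRing g] [LieAlgebra ℂ g] {ι : Type} [Fintype ι]
    (b : Module.Basis ι ℂ g) {𝔄 : Type} [Ring 𝔄] [Algebra ℂ 𝔄] {n : ℕ}
    (I : MultilinearMap ℂ (fun _ : Fin n => g) ℂ) (Z : Fin n → g ⊗[ℂ] 𝔄) : 𝔄 :=
  ∑ iv : Fin n → ι, I (fun j => b (iv j)) • (List.ofFn fun j => coordEv b (iv j) (Z j)).prod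

/-- `ad`-invariance of a multilinear form on `g`. -/
def IsInvForm {g : Type} [LieRing g] [LieAlgebra ℂ g] {n : ℕ}
    (I : MultilinearMap ℂ (fun _ : Fin n => g) ℂ) : Prop :=
  ∀ (X : g) (v : Fin n → g), ∑ j, I (Function.update v j ⁅v j, X⁆) = 0

/-- Symmetry of a multilinear form on `g`. -/
def IsSymForm {g : Type} [LieRing g] [LieAlgebra ℂ g] {n : ℕ}
    (I : MultilinearMap ℂ (fun _ : Fin n => g) ℂ) : Prop :=
  ∀ (σ : Equiv.Perm (Fin n)) (v : Fin n → g), I (fun j => v (σ j)) = I v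

/-- The five `g`-valued elements `F, ψ, φ, B, β` of the bigraded Weil algebra. -/
def BigradedWeil.genOf {g : Type} [LieRing g] [LieAlgebra ℂ g] {𝔄 : Type} [Ring 𝔄]
    [Algebra ℂ 𝔄] (W : BigradedWeil g 𝔄) : Fin 5 → g ⊗[ℂ] 𝔄 :=
  ![W.F, W.ψ, W.φ, W.B, W.β]

/-- The base `ℬ(g) ⊆ 𝔄(g)`: the span of the invariant "polynomials" `𝓘(F,ψ,φ,B,β)`. -/
def baseB {g : Type} [LieRing g] [LieAlgebra ℂ g] {ι : Type} [Fintype ι] (b : Module.Basis ι ℂ g)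
    {𝔄 : Type} [Ring 𝔄] [Algebra ℂ 𝔄] (W : BigradedWeil g 𝔄) : Submodule ℂ 𝔄 :=
  Submodule.span ℂ { x | ∃ (n : ℕ) (I : MultilinearMap ℂ (fun _ : Fin n => g) ℂ)
      (c : Fin n → Fin 5), IsInvForm I ∧ x = multiEval b I (fun j => W.genOf (c j)) }

end

noncomputable section

/-!
`δ'₁` lowers the total degree by one and `δ` raises it by one, and both are odd antiderivations,
so `D = δδ'₁ + δ'₁δ` is an even derivation on products of homogeneous elements. An invariant
polynomial in `F, ψ, φ, B, β` is a linear combination of products of coordinates of these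
generators, so it suffices to show that `D` fixes `F, ψ, B, β` and kills `φ`. This follows from
the structure equations of the Weil algebra, `δ² = 0`, `dδ = -δd` and the graded Jacobi
identity; the key identity is the Bianchi-type formula `δψ = [ψ, α] - β`.
-/

open TensorProduct

section TensorBracket

variable {g : Type} [LieRing g] [LieAlgebra ℂ g] {Ω : Type} [Ring Ω] [Algebra ℂ Ω]

lemma gaBracket_tmul (X Y : g) (p q : Ω) :
    gaBracket g Ω (X ⊗ₜ p) (Y ⊗ₜ q) = ⁅X, Y⁆ ⊗ₜ (p * q) := by
  simp [gaBracket, map₂_apply_tmul]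

lemma coordEv_tmul {ι : Type} (b : Module.Basis ι ℂ g) (i : ι) (X : g) (p : Ω) :
    coordEv b i (X ⊗ₜ p) = b.coord i X • p := by
  simp [coordEv]

lemma coordEv_lTensor {ι : Type} (b : Module.Basis ι ℂ g) (i : ι) (L : Ω →ₗ[ℂ] Ω)
    (Z : g ⊗[ℂ] Ω) : coordEv b i (L.lTensor g Z) = L (coordEv b i Z) := by
  induction Z using TensorProduct.induction_on with
  | zero => simp
  | tmul X p => simp [coordEv_tmul]
  | add x y hx hy => simp [hx, hy]

lemma coordEv_mem_of_mem_gvSub {ι : Type} (b : Module.Basis ι ℂ g) (i : ι)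
    {S : Submodule ℂ Ω} {Z : g ⊗[ℂ] Ω} (hZ : Z ∈ gvSub g S) : coordEv b i Z ∈ S := by
  obtain ⟨z, rfl⟩ := hZ
  induction z using TensorProduct.induction_on with
  | zero => simp
  | tmul X s => simpa [coordEv_tmul] using S.smul_mem (b.coord i X) s.2
  | add x y hx hy => simpa using S.add_mem hx hy

lemma lTensor_mem_gvSub {S S' : Submodule ℂ Ω} {L : Ω →ₗ[ℂ] Ω} (hL : ∀ s ∈ S, L s ∈ S')
    {Z : g ⊗[ℂ] Ω} (hZ : Z ∈ gvSub g S) : L.lTensor g Z ∈ gvSub g S' := by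
  obtain ⟨z, rfl⟩ := hZ
  refine ⟨(LinearMap.codRestrict S' (L ∘ₗ S.subtype) fun s => hL s.1 s.2).lTensor g z, ?_⟩
  rw [← LinearMap.lTensor_comp_apply, ← LinearMap.lTensor_comp_apply]
  rfl

lemma gaBracket_mem_gvSub {S T U : Submodule ℂ Ω} (hmul : ∀ p ∈ S, ∀ q ∈ T, p * q ∈ U)
    {Z V : g ⊗[ℂ] Ω} (hZ : Z ∈ gvSub g S) (hV : V ∈ gvSub g T) :
    gaBracket g Ω Z V ∈ gvSub g U := by
  obtain ⟨z, rfl⟩ := hZ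
  obtain ⟨v, rfl⟩ := hV
  induction z using TensorProduct.induction_on with
  | zero => simp
  | add x y hx hy => simpa using add_mem hx hy
  | tmul X s =>
    induction v using TensorProduct.induction_on with
    | zero => simp
    | add x y hx hy => simpa using add_mem hx hy
    | tmul Y t => exact ⟨⁅X, Y⁆ ⊗ₜ ⟨s * t, hmul s s.2 t t.2⟩, by simp [gaBracket_tmul]⟩

lemma lTensor_gaBracket_of_leibniz {S : Submodule ℂ Ω} (R : Ω →ₗ[ℂ] Ω) (ε : ℂ)
    (hR : ∀ p ∈ S, ∀ q, R (p * q) = R p * q + ε • (p * R q))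
    {Z : g ⊗[ℂ] Ω} (hZ : Z ∈ gvSub g S) (V : g ⊗[ℂ] Ω) :
    R.lTensor g (gaBracket g Ω Z V)
      = gaBracket g Ω (R.lTensor g Z) V + ε • gaBracket g Ω Z (R.lTensor g V) := by
  obtain ⟨z, rfl⟩ := hZ
  induction z using TensorProduct.induction_on with
  | zero => simp
  | add x y hx hy =>
    simp only [map_add, LinearMap.add_apply, smul_add] at hx hy ⊢
    rw [hx, hy]; abel
  | tmul X s =>
    induction V using TensorProduct.induction_on with
    | zero => simp
    | add x y hx hy =>
      simp only [map_add, smul_add] at hx hy ⊢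
      rw [hx, hy]; abel
    | tmul Y q =>
      simp only [LinearMap.lTensor_tmul, Submodule.coe_subtype, gaBracket_tmul, hR s s.2 q,
        tmul_add, tmul_smul]

lemma gaBracket_eq_neg_smul_swap {S T : Submodule ℂ Ω} (ε : ℂ)
    (hcomm : ∀ p ∈ S, ∀ q ∈ T, p * q = ε • (q * p))
    {Z V : g ⊗[ℂ] Ω} (hZ : Z ∈ gvSub g S) (hV : V ∈ gvSub g T) :
    gaBracket g Ω Z V = -(ε • gaBracket g Ω V Z) := by
  obtain ⟨z, rfl⟩ := hZ
  obtain ⟨v, rfl⟩ := hV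
  induction z using TensorProduct.induction_on with
  | zero => simp
  | add x y hx hy =>
    simp only [map_add, LinearMap.add_apply, smul_add] at hx hy ⊢
    rw [hx, hy]; abel
  | tmul X s =>
    induction v using TensorProduct.induction_on with
    | zero => simp
    | add x y hx hy =>
      simp only [map_add, LinearMap.add_apply, smul_add] at hx hy ⊢
      rw [hx, hy]; abel
    | tmul Y t =>
      simp only [LinearMap.lTensor_tmul, Submodule.coe_subtype, gaBracket_tmul]
      rw [hcomm s s.2 t t.2, tmul_smul, ← lie_skew Y X, neg_tmul, smul_neg, neg_neg]

lemma gaBracket_gaBracket {S T : Submodule ℂ Ω} (ε : ℂ)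
    (hcomm : ∀ p ∈ S, ∀ q ∈ T, p * q = ε • (q * p))
    {Z V : g ⊗[ℂ] Ω} (hZ : Z ∈ gvSub g S) (hV : V ∈ gvSub g T) (U : g ⊗[ℂ] Ω) :
    gaBracket g Ω Z (gaBracket g Ω V U)
      = gaBracket g Ω (gaBracket g Ω Z V) U + ε • gaBracket g Ω V (gaBracket g Ω Z U) := by
  obtain ⟨z, rfl⟩ := hZ
  obtain ⟨v, rfl⟩ := hV
  induction z using TensorProduct.induction_on with
  | zero => simp
  | add x y hx hy =>
    simp only [map_add, LinearMap.add_apply, smul_add] at hx hy ⊢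
    rw [hx, hy]; abel
  | tmul X s =>
    induction v using TensorProduct.induction_on with
    | zero => simp
    | add x y hx hy =>
      simp only [map_add, LinearMap.add_apply, smul_add] at hx hy ⊢
      rw [hx, hy]; abel
    | tmul Y t =>
      induction U using TensorProduct.induction_on with
      | zero => simp
      | add x y hx hy =>
        simp only [map_add, smul_add] at hx hy ⊢
        rw [hx, hy]; abel
      | tmul X' r =>
        have hswap : (s * t : Ω) * r = ε • (t * (s * r)) := by
          rw [hcomm s s.2 t t.2, smul_mul_assoc, mul_assoc]
        simp only [LinearMap.lTensor_tmul, Submodule.coe_subtype, gaBracket_tmul]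
        rw [leibniz_lie, add_tmul, ← mul_assoc, hswap, tmul_smul, tmul_smul]

end TensorBracket

namespace BigradedWeil

variable {g : Type} [LieRing g] [LieAlgebra ℂ g] {𝔄 : Type} [Ring 𝔄] [Algebra ℂ 𝔄]
  (W : BigradedWeil g 𝔄)

local notation "LT" => LinearMap.lTensor g
local notation "BR" => gaBracket g 𝔄

lemma lTensor_δ_lTensor_δ (Z : g ⊗[ℂ] 𝔄) : LT W.δ (LT W.δ Z) = 0 := by
  rw [← LinearMap.lTensor_comp_apply, show W.δ ∘ₗ W.δ = 0 from LinearMap.ext W.δ_sq,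
    LinearMap.lTensor_zero, LinearMap.zero_apply]

lemma lTensor_δ_lTensor_d (Z : g ⊗[ℂ] 𝔄) : LT W.δ (LT W.d Z) = -LT W.d (LT W.δ Z) := by
  have h : W.δ ∘ₗ W.d = -(W.d ∘ₗ W.δ) :=
    LinearMap.ext fun x => eq_neg_of_add_eq_zero_left (add_comm (W.d (W.δ x)) _ ▸ W.d_δ x)
  rw [← LinearMap.lTensor_comp_apply, ← LinearMap.lTensor_comp_apply, h,
    LinearMap.lTensor_neg, LinearMap.neg_apply]

lemma gaBracket_mem {k l m n : ℕ} {Z V : g ⊗[ℂ] 𝔄} (hZ : Z ∈ gvSub g (W.gr k l))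
    (hV : V ∈ gvSub g (W.gr m n)) : BR Z V ∈ gvSub g (W.gr (k + m) (l + n)) :=
  gaBracket_mem_gvSub (W.graded.2.1 k l m n) hZ hV

lemma lTensor_gaBracket {R : 𝔄 →ₗ[ℂ] 𝔄} (hR : IsAntideriv W.gr R) {k l : ℕ}
    {Z : g ⊗[ℂ] 𝔄} (hZ : Z ∈ gvSub g (W.gr k l)) (V : g ⊗[ℂ] 𝔄) :
    LT R (BR Z V) = BR (LT R Z) V + (-1 : ℂ) ^ (k + l) • BR Z (LT R V) :=
  lTensor_gaBracket_of_leibniz R _ (hR k l) hZ V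

lemma lTensor_gaBracket_eq_zero {R : 𝔄 →ₗ[ℂ] 𝔄} (hR : IsAntideriv W.gr R) {k l : ℕ}
    {Z : g ⊗[ℂ] 𝔄} (hZ : Z ∈ gvSub g (W.gr k l)) {V : g ⊗[ℂ] 𝔄}
    (hRZ : LT R Z = 0) (hRV : LT R V = 0) : LT R (BR Z V) = 0 := by
  simp [W.lTensor_gaBracket hR hZ, hRZ, hRV]

lemma gaBracket_swap {k l m n : ℕ} {Z V : g ⊗[ℂ] 𝔄} (hZ : Z ∈ gvSub g (W.gr k l))
    (hV : V ∈ gvSub g (W.gr m n)) :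
    BR Z V = -((-1 : ℂ) ^ ((k + l) * (m + n)) • BR V Z) :=
  gaBracket_eq_neg_smul_swap _ (W.graded.2.2.1 k l m n) hZ hV

lemma gaBracket_jacobi {k l m n : ℕ} {Z V : g ⊗[ℂ] 𝔄} (hZ : Z ∈ gvSub g (W.gr k l))
    (hV : V ∈ gvSub g (W.gr m n)) (U : g ⊗[ℂ] 𝔄) :
    BR Z (BR V U) = BR (BR Z V) U + (-1 : ℂ) ^ ((k + l) * (m + n)) • BR V (BR Z U) :=
  gaBracket_gaBracket _ (W.graded.2.2.1 k l m n) hZ hV U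

lemma lTensor_δ_α : LT W.δ W.α = W.φ - (2⁻¹ : ℂ) • BR W.α W.α := by
  rw [W.eqφ]; abel

lemma lTensor_d_α : LT W.d W.α = W.ψ - W.ξ - BR W.A W.α := by
  rw [W.eqψ, ← W.eqξ]; abel

lemma lTensor_d_φ : LT W.d W.φ = W.β - BR W.A W.φ := by
  rw [W.eqβ]; abel

lemma lTensor_δ_F : LT W.δ W.F = W.B - BR W.α W.F := by
  rw [W.eqB]; abel

lemma lTensor_δ_φ : LT W.δ W.φ = BR (LT W.δ W.α) W.α := by
  have hswap := W.gaBracket_swap W.α_mem (lTensor_mem_gvSub (W.δ_gr 0 1) W.α_mem)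
  rw [W.eqφ, map_add, map_smul, lTensor_δ_lTensor_δ, W.lTensor_gaBracket W.δ_antideriv W.α_mem,
    hswap]
  norm_num
  module

lemma lTensor_d_lTensor_δ_α : LT W.d (LT W.δ W.α) = LT W.d W.φ - BR (LT W.d W.α) W.α := by
  have hswap := W.gaBracket_swap W.α_mem (lTensor_mem_gvSub (W.d_gr 0 1) W.α_mem)
  rw [lTensor_δ_α, map_sub, map_smul, W.lTensor_gaBracket W.d_antideriv W.α_mem, hswap]
  norm_num
  module

lemma lTensor_δ_ψ : LT W.δ W.ψ = BR W.ψ W.α - W.β := by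
  have hAαα : BR W.A (BR W.α W.α) = (2 : ℂ) • BR (BR W.A W.α) W.α := by
    have hswap := W.gaBracket_swap W.α_mem (W.gaBracket_mem W.A_mem W.α_mem)
    rw [W.gaBracket_jacobi W.A_mem W.α_mem, hswap]
    norm_num
    module
  have hψα : BR W.ψ W.α = BR W.ξ W.α + BR (LT W.d W.α) W.α + BR (BR W.A W.α) W.α := by
    rw [W.eqψ, ← W.eqξ]
    simp only [map_add, LinearMap.add_apply]
  rw [hψα, W.eqβ]
  nth_rw 1 [W.eqψ]
  rw [map_add, map_add, lTensor_δ_lTensor_δ, lTensor_δ_lTensor_d, lTensor_d_lTensor_δ_α,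
    W.lTensor_gaBracket W.δ_antideriv W.A_mem, ← W.eqξ, lTensor_δ_α]
  simp only [map_sub, map_smul, hAαα]
  norm_num
  module

lemma lTensor_δ_B : LT W.δ W.B = BR (LT W.δ W.α) W.F - BR W.α (LT W.δ W.F) := by
  rw [W.eqB, map_add, lTensor_δ_lTensor_δ, W.lTensor_gaBracket W.δ_antideriv W.α_mem]
  norm_num
  module

lemma lTensor_δ_β : LT W.δ W.β = -BR (LT W.d (LT W.δ W.α)) W.α
    - BR (LT W.δ W.α) (LT W.d W.α) + BR W.ξ W.φ - BR W.A (LT W.δ W.φ) := by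
  have hδα := lTensor_mem_gvSub (W.δ_gr 0 1) W.α_mem
  rw [W.eqβ, map_add, lTensor_δ_lTensor_d, lTensor_δ_φ, W.lTensor_gaBracket W.d_antideriv hδα,
    W.lTensor_gaBracket W.δ_antideriv W.A_mem, ← W.eqξ, ← lTensor_δ_φ]
  norm_num
  module

end BigradedWeil

section DeltaOnePrime

variable {g : Type} [LieRing g] [LieAlgebra ℂ g] {𝔄 : Type} [Ring 𝔄] [Algebra ℂ 𝔄]

local notation "LT" => LinearMap.lTensor g
local notation "BR" => gaBracket g 𝔄

structure IsDeltaOnePrime (W : BigradedWeil g 𝔄) (δ₁' : 𝔄 →ₗ[ℂ] 𝔄) : Prop where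
  antideriv : IsAntideriv W.gr δ₁'
  map_B : LT δ₁' W.B = W.F
  map_β : LT δ₁' W.β = -W.ψ
  map_A : LT δ₁' W.A = 0
  map_α : LT δ₁' W.α = 0
  map_F : LT δ₁' W.F = 0
  map_φ : LT δ₁' W.φ = 0
  map_ψ : LT δ₁' W.ψ = 0
  map_ξ : LT δ₁' W.ξ = 0

namespace IsDeltaOnePrime

variable {W : BigradedWeil g 𝔄} {δ₁' : 𝔄 →ₗ[ℂ] 𝔄}

lemma lTensor_δ_α (h : IsDeltaOnePrime W δ₁') : LT δ₁' (LT W.δ W.α) = 0 := by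
  rw [W.lTensor_δ_α, map_sub, map_smul, h.map_φ,
    W.lTensor_gaBracket_eq_zero h.antideriv W.α_mem h.map_α h.map_α, smul_zero, sub_zero]

lemma lTensor_d_α (h : IsDeltaOnePrime W δ₁') : LT δ₁' (LT W.d W.α) = 0 := by
  rw [W.lTensor_d_α, map_sub, map_sub, h.map_ψ, h.map_ξ,
    W.lTensor_gaBracket_eq_zero h.antideriv W.A_mem h.map_A h.map_α, sub_zero, sub_zero]

lemma lTensor_d_φ (h : IsDeltaOnePrime W δ₁') : LT δ₁' (LT W.d W.φ) = -W.ψ := by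
  rw [W.lTensor_d_φ, map_sub, h.map_β,
    W.lTensor_gaBracket_eq_zero h.antideriv W.A_mem h.map_A h.map_φ, sub_zero]

lemma lTensor_δ_F (h : IsDeltaOnePrime W δ₁') : LT δ₁' (LT W.δ W.F) = W.F := by
  rw [W.lTensor_δ_F, map_sub, h.map_B,
    W.lTensor_gaBracket_eq_zero h.antideriv W.α_mem h.map_α h.map_F, sub_zero]

lemma lTensor_d_lTensor_δ_α (h : IsDeltaOnePrime W δ₁') :
    LT δ₁' (LT W.d (LT W.δ W.α)) = -W.ψ := by
  have hdα := lTensor_mem_gvSub (W.d_gr 0 1) W.α_mem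
  rw [W.lTensor_d_lTensor_δ_α, map_sub, h.lTensor_d_φ,
    W.lTensor_gaBracket_eq_zero h.antideriv hdα h.lTensor_d_α h.map_α, sub_zero]

lemma lTensor_δ_φ (h : IsDeltaOnePrime W δ₁') : LT δ₁' (LT W.δ W.φ) = 0 := by
  have hδα := lTensor_mem_gvSub (W.δ_gr 0 1) W.α_mem
  rw [W.lTensor_δ_φ, W.lTensor_gaBracket_eq_zero h.antideriv hδα h.lTensor_δ_α h.map_α]

lemma lTensor_δ_ψ (h : IsDeltaOnePrime W δ₁') : LT δ₁' (LT W.δ W.ψ) = W.ψ := by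
  rw [W.lTensor_δ_ψ, map_sub, h.map_β,
    W.lTensor_gaBracket_eq_zero h.antideriv W.ψ_mem h.map_ψ h.map_α, zero_sub, neg_neg]

lemma lTensor_δ_B (h : IsDeltaOnePrime W δ₁') : LT δ₁' (LT W.δ W.B) = BR W.α W.F := by
  have hδα := lTensor_mem_gvSub (W.δ_gr 0 1) W.α_mem
  rw [W.lTensor_δ_B, map_sub, W.lTensor_gaBracket_eq_zero h.antideriv hδα h.lTensor_δ_α h.map_F,
    W.lTensor_gaBracket h.antideriv W.α_mem, h.map_α, h.lTensor_δ_F]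
  norm_num

lemma lTensor_δ_β (h : IsDeltaOnePrime W δ₁') : LT δ₁' (LT W.δ W.β) = BR W.ψ W.α := by
  have hδα := lTensor_mem_gvSub (W.δ_gr 0 1) W.α_mem
  have hdδα := lTensor_mem_gvSub (W.d_gr 0 2) hδα
  rw [W.lTensor_δ_β, map_sub, map_add, map_sub, map_neg,
    W.lTensor_gaBracket h.antideriv hdδα, h.lTensor_d_lTensor_δ_α, h.map_α,
    W.lTensor_gaBracket_eq_zero h.antideriv hδα h.lTensor_δ_α h.lTensor_d_α,
    W.lTensor_gaBracket_eq_zero h.antideriv W.ξ_mem h.map_ξ h.map_φ,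
    W.lTensor_gaBracket_eq_zero h.antideriv W.A_mem h.map_A h.lTensor_δ_φ]
  simp

end IsDeltaOnePrime

end DeltaOnePrime

namespace BigradedWeil

variable {g : Type} [LieRing g] [LieAlgebra ℂ g] {𝔄 : Type} [Ring 𝔄] [Algebra ℂ 𝔄]
  (W : BigradedWeil g 𝔄)

local notation "LT" => LinearMap.lTensor g

def anticommδ (R : 𝔄 →ₗ[ℂ] 𝔄) : 𝔄 →ₗ[ℂ] 𝔄 := W.δ ∘ₗ R + R ∘ₗ W.δ

lemma anticommδ_apply (R : 𝔄 →ₗ[ℂ] 𝔄) (x : 𝔄) : W.anticommδ R x = W.δ (R x) + R (W.δ x) :=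
  rfl

lemma lTensor_anticommδ (R : 𝔄 →ₗ[ℂ] 𝔄) (Z : g ⊗[ℂ] 𝔄) :
    LT (W.anticommδ R) Z = LT W.δ (LT R Z) + LT R (LT W.δ Z) := by
  rw [anticommδ, LinearMap.lTensor_add, LinearMap.add_apply, LinearMap.lTensor_comp_apply,
    LinearMap.lTensor_comp_apply]

def LowersDegree (R : 𝔄 →ₗ[ℂ] 𝔄) (a : 𝔄) : Prop :=
  ∃ k l k' l', a ∈ W.gr k l ∧ R a ∈ W.gr k' l' ∧ k' + l' + 1 = k + l

variable {W}

lemma _root_.IsAntideriv.map_one {R : 𝔄 →ₗ[ℂ] 𝔄} (hR : IsAntideriv W.gr R) : R 1 = 0 := by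
  simpa using hR 0 0 1 W.graded.1 1

lemma anticommδ_mul {R : 𝔄 →ₗ[ℂ] 𝔄} (hR : IsAntideriv W.gr R) {k l k' l' : ℕ} {a : 𝔄}
    (ha : a ∈ W.gr k l) (hRa : R a ∈ W.gr k' l') (hdeg : k' + l' + 1 = k + l) (t : 𝔄) :
    W.anticommδ R (a * t) = W.anticommδ R a * t + a * W.anticommδ R t := by
  have hδa : W.δ a ∈ W.gr k (l + 1) := W.δ_gr k l a ha
  have hsign : (-1 : ℂ) ^ (k' + l') = -(-1 : ℂ) ^ (k + l) := by
    rw [← hdeg, pow_succ]; ring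
  have hsign' : (-1 : ℂ) ^ (k + (l + 1)) = -(-1 : ℂ) ^ (k + l) := by
    rw [← add_assoc, pow_succ]; ring
  have hsq : (-1 : ℂ) ^ (k + l) * (-1 : ℂ) ^ (k + l) = 1 := by
    rw [← pow_add, ← two_mul, pow_mul]; norm_num
  simp only [anticommδ_apply]
  rw [hR k l a ha t, map_add, map_smul, W.δ_antideriv k' l' _ hRa t,
    W.δ_antideriv k l a ha (R t), hsign, W.δ_antideriv k l a ha t, map_add, map_smul,
    hR k (l + 1) _ hδa t, hR k l a ha (W.δ t), hsign']
  -- `R a` and `δ a` have opposite parity to `a`, so the mixed terms cancel in pairs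
  simp only [smul_add, mul_add, add_mul, smul_smul, neg_smul, hsq, one_smul]
  abel

lemma anticommδ_prod_ofFn {R : 𝔄 →ₗ[ℂ] 𝔄} (hR : IsAntideriv W.gr R) {n : ℕ} (a : Fin n → 𝔄)
    (w : Fin n → ℂ)
    (hdeg : ∀ j, W.LowersDegree R (a j))
    (hD : ∀ j, W.anticommδ R (a j) = w j • a j) :
    W.anticommδ R (List.ofFn a).prod = (∑ j, w j) • (List.ofFn a).prod := by
  induction n with
  | zero => simp [anticommδ_apply, hR.map_one, W.δ_antideriv.map_one]
  | succ n ih =>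
    obtain ⟨k, l, k', l', ha, hRa, hkl⟩ := hdeg 0
    rw [List.ofFn_succ, List.prod_cons, anticommδ_mul hR ha hRa hkl, hD 0,
      ih (fun j => a j.succ) (fun j => w j.succ) (fun j => hdeg j.succ) (fun j => hD j.succ),
      Fin.sum_univ_succ, smul_mul_assoc, mul_smul_comm, add_smul]

lemma lowersDegree_coordEv {ι : Type} (b : Module.Basis ι ℂ g) (i : ι) {R : 𝔄 →ₗ[ℂ] 𝔄}
    {k l k' l' : ℕ} {Z : g ⊗[ℂ] 𝔄} (hZ : Z ∈ gvSub g (W.gr k l))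
    (hRZ : LT R Z ∈ gvSub g (W.gr k' l')) (hdeg : k' + l' + 1 = k + l) :
    W.LowersDegree R (coordEv b i Z) :=
  ⟨k, l, k', l', coordEv_mem_of_mem_gvSub b i hZ,
    coordEv_lTensor b i R Z ▸ coordEv_mem_of_mem_gvSub b i hRZ, hdeg⟩

lemma anticommδ_multiEval {R : 𝔄 →ₗ[ℂ] 𝔄} (hR : IsAntideriv W.gr R) {ι : Type} [Fintype ι]
    (b : Module.Basis ι ℂ g) {n : ℕ} (I : MultilinearMap ℂ (fun _ : Fin n => g) ℂ)
    (Z : Fin n → g ⊗[ℂ] 𝔄) (w : Fin n → ℂ)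
    (hdeg : ∀ j i, W.LowersDegree R (coordEv b i (Z j)))
    (hD : ∀ j, LT (W.anticommδ R) (Z j) = w j • Z j) :
    W.anticommδ R (multiEval b I Z) = (∑ j, w j) • multiEval b I Z := by
  simp only [multiEval, map_sum, map_smul, Finset.smul_sum]
  refine Finset.sum_congr rfl fun iv _ => ?_
  rw [anticommδ_prod_ofFn hR _ w, smul_comm]
  · exact fun j => hdeg j (iv j)
  · intro j
    rw [← coordEv_lTensor, hD j, map_smul]

end BigradedWeil

namespace IsDeltaOnePrime

variable {g : Type} [LieRing g] [LieAlgebra ℂ g] {𝔄 : Type} [Ring 𝔄] [Algebra ℂ 𝔄]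
  {W : BigradedWeil g 𝔄} {δ₁' : 𝔄 →ₗ[ℂ] 𝔄}

local notation "LT" => LinearMap.lTensor g

lemma lowersDegree_coordEv_genOf (h : IsDeltaOnePrime W δ₁') {ι : Type}
    (b : Module.Basis ι ℂ g) (i : ι) (m : Fin 5) :
    W.LowersDegree δ₁' (coordEv b i (W.genOf m)) := by
  fin_cases m
  · exact W.lowersDegree_coordEv b i (k' := 1) (l' := 0) W.F_mem (h.map_F ▸ zero_mem _) rfl
  · exact W.lowersDegree_coordEv b i (k' := 1) (l' := 0) W.ψ_mem (h.map_ψ ▸ zero_mem _) rfl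
  · exact W.lowersDegree_coordEv b i (k' := 1) (l' := 0) W.φ_mem (h.map_φ ▸ zero_mem _) rfl
  · exact W.lowersDegree_coordEv b i W.B_mem (h.map_B ▸ W.F_mem) rfl
  · exact W.lowersDegree_coordEv b i W.β_mem (h.map_β ▸ neg_mem W.ψ_mem) rfl

lemma lTensor_anticommδ_genOf (h : IsDeltaOnePrime W δ₁') (m : Fin 5) :
    LT (W.anticommδ δ₁') (W.genOf m) = (if m ≠ 2 then 1 else 0 : ℂ) • W.genOf m := by
  rw [W.lTensor_anticommδ]
  fin_cases m
  · simp [BigradedWeil.genOf, h.map_F, h.lTensor_δ_F]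
  · simp [BigradedWeil.genOf, h.map_ψ, h.lTensor_δ_ψ]
  · simp [BigradedWeil.genOf, h.map_φ, h.lTensor_δ_φ]
  · simp [BigradedWeil.genOf, h.map_B, h.lTensor_δ_B, W.lTensor_δ_F]
  · simp [BigradedWeil.genOf, h.map_β, h.lTensor_δ_β, W.lTensor_δ_ψ]

end IsDeltaOnePrime

theorem stmt_11_general (g : Type) [LieRing g] [LieAlgebra ℂ g]
    {ι : Type} [Fintype ι] (b : Module.Basis ι ℂ g)
    (𝔄 : Type) [Ring 𝔄] [Algebra ℂ 𝔄] (W : BigradedWeil g 𝔄)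
    (δ₁' : 𝔄 →ₗ[ℂ] 𝔄) (h₁ : IsAntideriv W.gr δ₁')
    (hB : LinearMap.lTensor g δ₁' W.B = W.F)
    (hβ : LinearMap.lTensor g δ₁' W.β = -W.ψ)
    (hA : LinearMap.lTensor g δ₁' W.A = 0) (hα : LinearMap.lTensor g δ₁' W.α = 0)
    (hF : LinearMap.lTensor g δ₁' W.F = 0) (hφ : LinearMap.lTensor g δ₁' W.φ = 0)
    (hψ : LinearMap.lTensor g δ₁' W.ψ = 0) (hξ : LinearMap.lTensor g δ₁' W.ξ = 0) :
    ∀ (n : ℕ) (I : MultilinearMap ℂ (fun _ : Fin n => g) ℂ) (c : Fin n → Fin 5),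
      IsInvForm I →
      W.δ (δ₁' (multiEval b I fun j => W.genOf (c j)))
          + δ₁' (W.δ (multiEval b I fun j => W.genOf (c j)))
        = (((Finset.univ.filter fun j => c j ≠ 2).card : ℕ) : ℂ) •
            multiEval b I fun j => W.genOf (c j) := by
  intro n I c _
  have h : IsDeltaOnePrime W δ₁' := ⟨h₁, hB, hβ, hA, hα, hF, hφ, hψ, hξ⟩
  rw [← W.anticommδ_apply, ← Finset.sum_boole]
  exact W.anticommδ_multiEval h₁ b I _ _ (fun j i => h.lowersDegree_coordEv_genOf b i (c j))
    fun j => h.lTensor_anticommδ_genOf (c j)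

/-- Lemma 2.2, second part: with `δ'₁` the antiderivation with
`δ'₁B = F`, `δ'₁β = −ψ` and zero on the other generators, `δδ'₁ + δ'₁δ` is, on the base
`ℬ(g)`, the degree operator counting the factors from `(F, ψ, B, β)`. -/
theorem stmt_11 (g : Type) [LieRing g] [LieAlgebra ℂ g] [FiniteDimensional ℂ g]
    {ι : Type} [Fintype ι] (b : Module.Basis ι ℂ g)
    (𝔄 : Type) [Ring 𝔄] [Algebra ℂ 𝔄] (W : BigradedWeil g 𝔄)
    (δ₁' : 𝔄 →ₗ[ℂ] 𝔄) (h₁ : IsAntideriv W.gr δ₁')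
    (hB : LinearMap.lTensor g δ₁' W.B = W.F)
    (hβ : LinearMap.lTensor g δ₁' W.β = -W.ψ)
    (hA : LinearMap.lTensor g δ₁' W.A = 0) (hα : LinearMap.lTensor g δ₁' W.α = 0)
    (hF : LinearMap.lTensor g δ₁' W.F = 0) (hφ : LinearMap.lTensor g δ₁' W.φ = 0)
    (hψ : LinearMap.lTensor g δ₁' W.ψ = 0) (hξ : LinearMap.lTensor g δ₁' W.ξ = 0) :
    ∀ (n : ℕ) (I : MultilinearMap ℂ (fun _ : Fin n => g) ℂ) (c : Fin n → Fin 5),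
      IsInvForm I →
      W.δ (δ₁' (multiEval b I fun j => W.genOf (c j)))
          + δ₁' (W.δ (multiEval b I fun j => W.genOf (c j)))
        = (((Finset.univ.filter fun j => c j ≠ 2).card : ℕ) : ℂ) •
            multiEval b I fun j => W.genOf (c j) :=
  stmt_11_general g b 𝔄 W δ₁' h₁ hB hβ hA hα hF hφ hψ hξ

end
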